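/- arXiv:1308.2851 — 3 statements merged into one kernel-verified Lean document; each statement's English description precedes it below -/
import Mathlib

section
/- Fix p ∈ [1,∞) and a metric space (X,d_X) containing at least two points. Then for every integer n ≥ 2, every n×n symmetric stochastic matrix A satisfies 2·γ(A, d_X^p) ≤ γ₊((I+A)/2, d_X^p) ≤ 2^{2p+1}·γ(A, d_X^p), where I is the n×n identity matrix. -/
open scoped ENNReal

/-- An `n × n` real matrix is symmetric and stochastic. -/
def IsSymmStochastic {n : ℕ} (A : Matrix (Fin n) (Fin n) ℝ) : Prop :=
  (∀ i j, A i j = A j i) ∧ (∀ i j, 0 ≤ A i j) ∧ ∀ i, ∑ j, A i j = 1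

/-- The nonlinear spectral gap quantity `γ(A, d_X^p)`. -/
noncomputable def gammaNL {n : ℕ} (A : Matrix (Fin n) (Fin n) ℝ)
    (X : Type*) [PseudoMetricSpace X] (p : ℝ) : ℝ≥0∞ :=
  sInf {g : ℝ≥0∞ | 0 < g ∧ ∀ x : Fin n → X,
    ENNReal.ofReal ((∑ i, ∑ j, dist (x i) (x j) ^ p) / (n : ℝ) ^ 2) ≤
      g / (n : ℝ≥0∞) * ENNReal.ofReal (∑ i, ∑ j, A i j * dist (x i) (x j) ^ p)}

/-- The absolute nonlinear spectral gap quantity `γ₊(A, d_X^p)`. -/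
noncomputable def gammaPlusNL {n : ℕ} (A : Matrix (Fin n) (Fin n) ℝ)
    (X : Type*) [PseudoMetricSpace X] (p : ℝ) : ℝ≥0∞ :=
  sInf {g : ℝ≥0∞ | 0 < g ∧ ∀ x y : Fin n → X,
    ENNReal.ofReal ((∑ i, ∑ j, dist (x i) (y j) ^ p) / (n : ℝ) ^ 2) ≤
      g / (n : ℝ≥0∞) * ENNReal.ofReal (∑ i, ∑ j, A i j * dist (x i) (y j) ^ p)}

/-!
Taking `y = x` in the inequality defining `γ₊((I+A)/2)` kills its diagonal part and leaves the
inequality defining `γ(A)` with half the constant. Conversely, for configurations `x, y` the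
triangle inequality through `x_j` bounds `∑ d(x_i,y_j)^p` by the energy of `x` plus
`n · ∑ d(x_i,y_i)^p`, and the triangle inequality through `y_j` bounds the `A`-energy of `x` by
`2^p` times the `(I+A)/2`-energy of `(x, y)`. The diagonal term `∑ d(x_i,y_i)^p` is at most twice
that energy; it is absorbed using the a priori bound `γ(A) ≥ 2^{-p}`, which comes from averaging
the triangle inequality over a base point and testing on a nonconstant configuration.
-/

open Finset Matrix

/-- The condition on `g = ENNReal.ofReal r` in the definition of `gammaNL`, stated in `ℝ`. -/
def PoincareIneq {n : ℕ} (A : Matrix (Fin n) (Fin n) ℝ) (X : Type*) [PseudoMetricSpace X]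
    (p r : ℝ) : Prop :=
  ∀ x : Fin n → X, (∑ i, ∑ j, dist (x i) (x j) ^ p) / n ^ 2 ≤
    r / n * ∑ i, ∑ j, A i j * dist (x i) (x j) ^ p

def AbsPoincareIneq {n : ℕ} (A : Matrix (Fin n) (Fin n) ℝ) (X : Type*) [PseudoMetricSpace X]
    (p r : ℝ) : Prop :=
  ∀ x y : Fin n → X, (∑ i, ∑ j, dist (x i) (y j) ^ p) / n ^ 2 ≤
    r / n * ∑ i, ∑ j, A i j * dist (x i) (y j) ^ p

section

variable {X : Type*} {n : ℕ} {p : ℝ}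

lemma dist_rpow_le_two_rpow_mul_add [PseudoMetricSpace X] (hp : 1 ≤ p) (x y z : X) :
    dist x z ^ p ≤ 2 ^ (p - 1) * (dist x y ^ p + dist y z ^ p) := by
  have key := NNReal.rpow_add_le_mul_rpow_add_rpow (nndist x y) (nndist y z) hp
  calc dist x z ^ p ≤ (dist x y + dist y z) ^ p := by gcongr; exact dist_triangle x y z
    _ ≤ 2 ^ (p - 1) * (dist x y ^ p + dist y z ^ p) := by exact_mod_cast key

lemma ofReal_le_ofReal_div_mul_ofReal_iff {a b r : ℝ} (hn : 0 < n) (hr : 0 ≤ r) (hb : 0 ≤ b) :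
    ENNReal.ofReal a ≤ ENNReal.ofReal r / n * ENNReal.ofReal b ↔ a ≤ r / n * b := by
  rw [← ENNReal.ofReal_natCast, ← ENNReal.ofReal_div_of_pos (by exact_mod_cast hn),
    ← ENNReal.ofReal_mul (by positivity), ENNReal.ofReal_le_ofReal_iff (by positivity)]

lemma sum_half_one_add_mul (A : Matrix (Fin n) (Fin n) ℝ) (f : Fin n → Fin n → ℝ) :
    ∑ i, ∑ j, ((1 / 2 : ℝ) • (1 + A)) i j * f i j =
      (∑ i, f i i + ∑ i, ∑ j, A i j * f i j) / 2 := by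
  simp only [Matrix.smul_apply, Matrix.add_apply, one_apply, smul_eq_mul, mul_assoc, add_mul,
    ite_mul, one_mul, zero_mul, ← mul_sum, sum_add_distrib, sum_ite_eq, mem_univ, ↓reduceIte]
  ring

lemma half_one_add_nonneg {A : Matrix (Fin n) (Fin n) ℝ} (hA : ∀ i j, 0 ≤ A i j) (i j : Fin n) :
    0 ≤ ((1 / 2 : ℝ) • (1 + A)) i j := by
  simp only [Matrix.smul_apply, Matrix.add_apply, one_apply, smul_eq_mul]
  split_ifs <;> linarith [hA i j]

section PseudoMetric

variable [PseudoMetricSpace X] {A : Matrix (Fin n) (Fin n) ℝ}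

lemma sum_mul_dist_rpow_nonneg (hA : ∀ i j, 0 ≤ A i j) (x y : Fin n → X) :
    0 ≤ ∑ i, ∑ j, A i j * dist (x i) (y j) ^ p :=
  sum_nonneg fun i _ => sum_nonneg fun j _ => mul_nonneg (hA i j) (by positivity)

lemma PoincareIneq.sum_le {r : ℝ} (h : PoincareIneq A X p r) (hn : 0 < n) (x : Fin n → X) :
    ∑ i, ∑ j, dist (x i) (x j) ^ p ≤ r * n * ∑ i, ∑ j, A i j * dist (x i) (x j) ^ p := by
  refine ((div_le_iff₀ (by positivity)).1 (h x)).trans_eq ?_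
  field_simp

lemma gammaNL_le_ofReal (hn : 0 < n) (hA : ∀ i j, 0 ≤ A i j) {r : ℝ} (hr : 0 < r)
    (h : PoincareIneq A X p r) : gammaNL A X p ≤ ENNReal.ofReal r :=
  sInf_le ⟨ENNReal.ofReal_pos.2 hr, fun x =>
    (ofReal_le_ofReal_div_mul_ofReal_iff hn hr.le (sum_mul_dist_rpow_nonneg hA x x)).2 (h x)⟩

lemma gammaPlusNL_le_ofReal (hn : 0 < n) (hA : ∀ i j, 0 ≤ A i j) {r : ℝ} (hr : 0 < r)
    (h : AbsPoincareIneq A X p r) : gammaPlusNL A X p ≤ ENNReal.ofReal r :=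
  sInf_le ⟨ENNReal.ofReal_pos.2 hr, fun x y =>
    (ofReal_le_ofReal_div_mul_ofReal_iff hn hr.le (sum_mul_dist_rpow_nonneg hA x y)).2 (h x y)⟩

lemma le_gammaNL_of_forall (hn : 0 < n) (hA : ∀ i j, 0 ≤ A i j) {c : ℝ≥0∞}
    (h : ∀ r, 0 < r → PoincareIneq A X p r → c ≤ ENNReal.ofReal r) : c ≤ gammaNL A X p := by
  refine le_sInf fun g ⟨hg0, hg⟩ => ?_
  rcases eq_or_ne g ⊤ with rfl | hg_top
  · exact le_top
  rw [← ENNReal.ofReal_toReal hg_top] at hg ⊢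
  refine h _ (ENNReal.toReal_pos hg0.ne' hg_top) fun x => ?_
  exact (ofReal_le_ofReal_div_mul_ofReal_iff hn ENNReal.toReal_nonneg
    (sum_mul_dist_rpow_nonneg hA x x)).1 (hg x)

lemma le_gammaPlusNL_of_forall (hn : 0 < n) (hA : ∀ i j, 0 ≤ A i j) {c : ℝ≥0∞}
    (h : ∀ r, 0 < r → AbsPoincareIneq A X p r → c ≤ ENNReal.ofReal r) :
    c ≤ gammaPlusNL A X p := by
  refine le_sInf fun g ⟨hg0, hg⟩ => ?_
  rcases eq_or_ne g ⊤ with rfl | hg_top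
  · exact le_top
  rw [← ENNReal.ofReal_toReal hg_top] at hg ⊢
  refine h _ (ENNReal.toReal_pos hg0.ne' hg_top) fun x y => ?_
  exact (ofReal_le_ofReal_div_mul_ofReal_iff hn ENNReal.toReal_nonneg
    (sum_mul_dist_rpow_nonneg hA x y)).1 (hg x y)

lemma PoincareIneq.of_absPoincareIneq_half_one_add (hp : p ≠ 0) {r : ℝ}
    (h : AbsPoincareIneq ((1 / 2 : ℝ) • (1 + A)) X p r) : PoincareIneq A X p (r / 2) := by
  intro x
  have hx := h x x
  simp only [sum_half_one_add_mul, dist_self, Real.zero_rpow hp, sum_const_zero, zero_add] at hx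
  convert hx using 1
  ring

theorem two_mul_gammaNL_le_gammaPlusNL (hp : p ≠ 0) (hn : 0 < n) (hA : ∀ i j, 0 ≤ A i j) :
    2 * gammaNL A X p ≤ gammaPlusNL ((1 / 2 : ℝ) • (1 + A)) X p := by
  refine le_gammaPlusNL_of_forall hn (half_one_add_nonneg hA) fun r hr h => ?_
  calc 2 * gammaNL A X p ≤ 2 * ENNReal.ofReal (r / 2) :=
        mul_le_mul_right (gammaNL_le_ofReal hn hA (half_pos hr)
          (.of_absPoincareIneq_half_one_add hp h)) 2
    _ = ENNReal.ofReal r := by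
        rw [← ENNReal.ofReal_ofNat 2, ← ENNReal.ofReal_mul zero_le_two,
          mul_div_cancel₀ _ two_ne_zero]

lemma sum_sum_mul_left_of_mem_doublyStochastic (hA : A ∈ doublyStochastic ℝ (Fin n))
    (a : Fin n → ℝ) : ∑ i, ∑ j, A i j * a i = ∑ i, a i := by
  simp [← sum_mul, sum_row_of_mem_doublyStochastic hA]

lemma sum_sum_mul_right_of_mem_doublyStochastic (hA : A ∈ doublyStochastic ℝ (Fin n))
    (b : Fin n → ℝ) : ∑ i, ∑ j, A i j * b j = ∑ j, b j :=
  sum_mulVec_of_mem_doublyStochastic hA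

lemma natCast_mul_sum_mul_dist_rpow_le (hp : 1 ≤ p) (hA : A ∈ doublyStochastic ℝ (Fin n))
    (x : Fin n → X) :
    n * ∑ i, ∑ j, A i j * dist (x i) (x j) ^ p ≤ 2 ^ p * ∑ i, ∑ j, dist (x i) (x j) ^ p := by
  calc n * ∑ i, ∑ j, A i j * dist (x i) (x j) ^ p
      = ∑ _k : Fin n, ∑ i, ∑ j, A i j * dist (x i) (x j) ^ p := by simp
    _ ≤ ∑ k, ∑ i, ∑ j, A i j * (2 ^ (p - 1) * (dist (x i) (x k) ^ p + dist (x k) (x j) ^ p)) := by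
      gcongr with k _ i _ j _
      · exact nonneg_of_mem_doublyStochastic hA
      · exact dist_rpow_le_two_rpow_mul_add hp _ _ _
    _ = ∑ k, 2 ^ (p - 1) * (∑ i, dist (x i) (x k) ^ p + ∑ j, dist (x k) (x j) ^ p) := by
      refine sum_congr rfl fun k _ => ?_
      simp only [mul_add, mul_left_comm _ (2 ^ (p - 1) : ℝ), ← mul_sum, sum_add_distrib,
        sum_sum_mul_left_of_mem_doublyStochastic hA, sum_sum_mul_right_of_mem_doublyStochastic hA]
    _ = 2 ^ p * ∑ i, ∑ j, dist (x i) (x j) ^ p := by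
      rw [← mul_sum, sum_add_distrib, sum_comm, Real.rpow_sub_one two_ne_zero]
      ring

lemma sum_dist_rpow_le (hp : 1 ≤ p) (x y : Fin n → X) :
    ∑ i, ∑ j, dist (x i) (y j) ^ p ≤
      2 ^ (p - 1) * (∑ i, ∑ j, dist (x i) (x j) ^ p + n * ∑ i, dist (x i) (y i) ^ p) := by
  calc ∑ i, ∑ j, dist (x i) (y j) ^ p
      ≤ ∑ i, ∑ j, 2 ^ (p - 1) * (dist (x i) (x j) ^ p + dist (x j) (y j) ^ p) := by
        gcongr with i _ j _
        exact dist_rpow_le_two_rpow_mul_add hp _ _ _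
    _ = 2 ^ (p - 1) * (∑ i, ∑ j, dist (x i) (x j) ^ p + n * ∑ i, dist (x i) (y i) ^ p) := by
        simp [mul_add, mul_sum, sum_add_distrib, mul_left_comm]

lemma sum_mul_dist_rpow_le_two_rpow_mul (hp : 1 ≤ p) (hA : A ∈ doublyStochastic ℝ (Fin n))
    (x y : Fin n → X) :
    ∑ i, ∑ j, A i j * dist (x i) (x j) ^ p ≤
      2 ^ p * ∑ i, ∑ j, ((1 / 2 : ℝ) • (1 + A)) i j * dist (x i) (y j) ^ p := by
  calc ∑ i, ∑ j, A i j * dist (x i) (x j) ^ p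
      ≤ ∑ i, ∑ j, A i j * (2 ^ (p - 1) * (dist (x i) (y j) ^ p + dist (x j) (y j) ^ p)) := by
        gcongr with i _ j _
        · exact nonneg_of_mem_doublyStochastic hA
        · rw [dist_comm (x j)]
          exact dist_rpow_le_two_rpow_mul_add hp _ _ _
    _ = 2 ^ (p - 1) * (∑ i, dist (x i) (y i) ^ p + ∑ i, ∑ j, A i j * dist (x i) (y j) ^ p) := by
        simp only [mul_add, mul_left_comm _ (2 ^ (p - 1) : ℝ), ← mul_sum, sum_add_distrib,
          sum_sum_mul_right_of_mem_doublyStochastic hA (fun j => dist (x j) (y j) ^ p)]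
        ring
    _ = 2 ^ p * ∑ i, ∑ j, ((1 / 2 : ℝ) • (1 + A)) i j * dist (x i) (y j) ^ p := by
        rw [sum_half_one_add_mul, Real.rpow_sub_one two_ne_zero]
        ring

lemma AbsPoincareIneq.of_poincareIneq {r : ℝ} (hp : 1 ≤ p) (hn : 0 < n)
    (hA : A ∈ doublyStochastic ℝ (Fin n)) (hr : 1 ≤ 2 ^ p * r) (h : PoincareIneq A X p r) :
    AbsPoincareIneq ((1 / 2 : ℝ) • (1 + A)) X p (2 ^ (2 * p + 1) * r) := by
  intro x y
  set s : ℝ := 2 ^ p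
  set BS := ∑ i, ∑ j, ((1 / 2 : ℝ) • (1 + A)) i j * dist (x i) (y j) ^ p
  have hs : 0 < s := by positivity
  have hn0 : (0 : ℝ) < n := by positivity
  have hr0 : 0 ≤ r := by nlinarith
  have hA0 : ∀ i j, 0 ≤ A i j := fun _ _ => nonneg_of_mem_doublyStochastic hA
  have hBS : 0 ≤ BS := sum_mul_dist_rpow_nonneg (half_one_add_nonneg hA0) x y
  have hS := sum_dist_rpow_le hp x y
  rw [Real.rpow_sub_one two_ne_zero] at hS
  have hE : ∑ i, ∑ j, dist (x i) (x j) ^ p ≤ r * n * (s * BS) :=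
    (h.sum_le hn x).trans (by gcongr; exact sum_mul_dist_rpow_le_two_rpow_mul hp hA x y)
  have hD : ∑ i, dist (x i) (y i) ^ p ≤ 2 * BS := by
    have := sum_mul_dist_rpow_nonneg (p := p) hA0 x y
    simp only [BS, sum_half_one_add_mul]
    linarith
  have hconst : (2 : ℝ) ^ (2 * p + 1) = 2 * s ^ 2 := by
    rw [Real.rpow_add_one two_ne_zero, mul_comm 2 p, Real.rpow_mul zero_le_two]
    norm_num [s]
    ring
  rw [div_le_iff₀ (by positivity), hconst]
  calc ∑ i, ∑ j, dist (x i) (y j) ^ p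
      ≤ s / 2 * (r * n * (s * BS) + n * (2 * BS)) := hS.trans (by gcongr)
    _ = (s * r / 2 + 1) * s * n * BS := by ring
    _ ≤ 2 * s ^ 2 * r / n * BS * n ^ 2 := by
      rw [show 2 * s ^ 2 * r / n * BS * n ^ 2 = 2 * (s * r) * s * n * BS by field_simp]
      gcongr
      linarith

end PseudoMetric

lemma IsSymmStochastic.mem_doublyStochastic {A : Matrix (Fin n) (Fin n) ℝ}
    (hA : IsSymmStochastic A) : A ∈ doublyStochastic ℝ (Fin n) := by
  obtain ⟨hsymm, hnonneg, hrow⟩ := hA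
  refine mem_doublyStochastic_iff_sum.2 ⟨hnonneg, hrow, fun j => ?_⟩
  simp_rw [hsymm _ j]
  exact hrow j

lemma exists_sum_dist_rpow_pos [MetricSpace X] (hX : ∃ a b : X, a ≠ b) (hn : 2 ≤ n) :
    ∃ x : Fin n → X, 0 < ∑ i, ∑ j, dist (x i) (x j) ^ p := by
  obtain ⟨a, b, hab⟩ := hX
  have : Nontrivial (Fin n) := Fin.nontrivial_iff_two_le.2 hn
  obtain ⟨i, j, hij⟩ := exists_pair_ne (Fin n)
  set x : Fin n → X := fun k => if k = i then a else b
  have hxij : dist (x i) (x j) ^ p = dist a b ^ p := by simp [x, hij.symm]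
  refine ⟨x, (Real.rpow_pos_of_pos (dist_pos.2 hab) p).trans_le (hxij ▸ ?_)⟩
  exact (single_le_sum (fun j _ => by positivity) (mem_univ j)).trans
    (single_le_sum (f := fun i => ∑ j, dist (x i) (x j) ^ p)
      (fun i _ => sum_nonneg fun j _ => by positivity) (mem_univ i))

lemma PoincareIneq.one_le_two_rpow_mul [MetricSpace X] {A : Matrix (Fin n) (Fin n) ℝ} {r : ℝ}
    (hp : 1 ≤ p) (hX : ∃ a b : X, a ≠ b) (hn : 2 ≤ n) (hA : A ∈ doublyStochastic ℝ (Fin n))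
    (h : PoincareIneq A X p r) : 1 ≤ 2 ^ p * r := by
  obtain ⟨x, hx⟩ := exists_sum_dist_rpow_pos (p := p) hX hn
  have hn0 : (0 : ℝ) < n := Nat.cast_pos.2 (by omega)
  have hAx := natCast_mul_sum_mul_dist_rpow_le hp hA x
  have hAx0 := sum_mul_dist_rpow_nonneg (p := p) (A := A)
    (fun _ _ => nonneg_of_mem_doublyStochastic hA) x x
  have hEr := h.sum_le (by omega) x
  have hr : 0 ≤ r := by
    by_contra! hr
    nlinarith [mul_nonneg hn0.le hAx0]
  refine le_of_mul_le_mul_right ?_ hx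
  calc 1 * ∑ i, ∑ j, dist (x i) (x j) ^ p
      ≤ r * (n * ∑ i, ∑ j, A i j * dist (x i) (x j) ^ p) := by rw [one_mul, ← mul_assoc]; exact hEr
    _ ≤ r * (2 ^ p * ∑ i, ∑ j, dist (x i) (x j) ^ p) := by gcongr
    _ = 2 ^ p * r * ∑ i, ∑ j, dist (x i) (x j) ^ p := by ring

theorem gammaPlusNL_le_two_rpow_mul_gammaNL [MetricSpace X] {A : Matrix (Fin n) (Fin n) ℝ}
    (hp : 1 ≤ p) (hX : ∃ a b : X, a ≠ b) (hn : 2 ≤ n) (hA : A ∈ doublyStochastic ℝ (Fin n)) :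
    gammaPlusNL ((1 / 2 : ℝ) • (1 + A)) X p ≤ 2 ^ (2 * p + 1) * gammaNL A X p := by
  have hn0 : 0 < n := by omega
  have hA0 : ∀ i j, 0 ≤ A i j := fun _ _ => nonneg_of_mem_doublyStochastic hA
  have hc0 : (2 : ℝ≥0∞) ^ (2 * p + 1) ≠ 0 := by positivity
  have hc_top : (2 : ℝ≥0∞) ^ (2 * p + 1) ≠ ⊤ := by finiteness
  rw [← ENNReal.div_le_iff' hc0 hc_top]
  refine le_gammaNL_of_forall hn0 hA0 fun r hr h => ?_
  rw [ENNReal.div_le_iff' hc0 hc_top, ← ENNReal.ofReal_ofNat, ENNReal.ofReal_rpow_of_pos two_pos,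
    ← ENNReal.ofReal_mul (by positivity)]
  exact gammaPlusNL_le_ofReal hn0 (half_one_add_nonneg hA0) (by positivity)
    (.of_poincareIneq hp hn0 hA (h.one_le_two_rpow_mul hp hX hn hA) h)

end

/-- **Lemma.** Fix `p ∈ [1,∞)` and a metric space `X` with at least two points.  For every
integer `n ≥ 2`, every `n × n` symmetric stochastic matrix `A` satisfies
`2·γ(A,d_X^p) ≤ γ₊((I+A)/2, d_X^p) ≤ 2^{2p+1}·γ(A,d_X^p)`. -/
theorem gammaPlus_half_identity_plus_A (p : ℝ) (hp : 1 ≤ p)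
    (X : Type*) [MetricSpace X] (hX : ∃ a b : X, a ≠ b)
    {n : ℕ} (hn : 2 ≤ n) (A : Matrix (Fin n) (Fin n) ℝ) (hA : IsSymmStochastic A) :
    2 * gammaNL A X p ≤ gammaPlusNL ((1 / 2 : ℝ) • (1 + A)) X p ∧
      gammaPlusNL ((1 / 2 : ℝ) • (1 + A)) X p ≤ (2 : ℝ≥0∞) ^ (2 * p + 1) * gammaNL A X p :=
  ⟨two_mul_gammaNL_le_gammaPlusNL (zero_lt_one.trans_le hp).ne' (by omega) hA.2.1,
    gammaPlusNL_le_two_rpow_mul_gammaNL hp hX hn hA.mem_doublyStochastic⟩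
end

section
/- Fix p ∈ [1,∞) and m, n ∈ ℕ. Let (X,d_X) be a metric space and let A be an n×n symmetric stochastic matrix. Then γ(A, d_X^p) ≤ M_p(X;m)^p · m · γ(A^m, d_X^p). -/
open scoped ENNReal

/-- The Markov type `p` constant `M_p(X;m)` of `X` at time `m`. -/
noncomputable def markovTypeConst (X : Type*) [PseudoMetricSpace X] (p : ℝ) (m : ℕ) :
    ℝ≥0∞ :=
  sInf {M : ℝ≥0∞ | 0 < M ∧ ∀ (n : ℕ) (A : Matrix (Fin n) (Fin n) ℝ),
    IsSymmStochastic A → ∀ x : Fin n → X,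
      ENNReal.ofReal (∑ i, ∑ j, (A ^ m) i j * dist (x i) (x j) ^ p) ≤
        M ^ p * (m : ℝ≥0∞) * ENNReal.ofReal (∑ i, ∑ j, A i j * dist (x i) (x j) ^ p)}

/-!
Chaining the two defining inequalities shows that `M ^ p * m * g` is admissible for `γ(A)`
whenever `M` is admissible for `M_p(X;m)` and `g` for `γ(A^m)`. Passing to the infima is legitimate
because neither of them vanishes as soon as some configuration has two points at positive
distance: the idempotent `2 × 2` averaging matrix forces `M ^ p * m ≥ 1`, and a nonconstant
configuration bounds every admissible `g` from below. If no such configuration exists, `γ(A) = 0`.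
-/

noncomputable def averagingMatrix (k : ℕ) : Matrix (Fin k) (Fin k) ℝ :=
  Matrix.of fun _ _ => (k : ℝ)⁻¹

lemma isSymmStochastic_averagingMatrix {k : ℕ} (hk : k ≠ 0) :
    IsSymmStochastic (averagingMatrix k) :=
  ⟨fun _ _ => rfl, fun _ _ => by simp [averagingMatrix],
    fun _ => by simp [averagingMatrix, hk]⟩

lemma isIdempotentElem_averagingMatrix (k : ℕ) : IsIdempotentElem (averagingMatrix k) := by
  ext i j
  have hk : (k : ℝ) ≠ 0 := Nat.cast_ne_zero.mpr i.pos.ne'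
  simp only [averagingMatrix, Matrix.mul_apply, Matrix.of_apply, Finset.sum_const,
    Finset.card_univ, Fintype.card_fin, nsmul_eq_mul]
  field_simp

lemma ENNReal.le_sInf_mul_sInf {a : ℝ≥0∞} {S T : Set ℝ≥0∞} (hS : sInf S ≠ 0)
    (hT : sInf T ≠ 0) (h : ∀ s ∈ S, ∀ t ∈ T, a ≤ s * t) : a ≤ sInf S * sInf T := by
  rcases eq_or_ne (sInf S) ⊤ with hS' | hS'
  · simp [hS', hT]
  rcases eq_or_ne (sInf T) ⊤ with hT' | hT'
  · simp [hT', hS]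
  obtain ⟨s, hs, hs_lt⟩ := sInf_lt_iff.mp hS'.lt_top
  obtain ⟨t, ht, ht_lt⟩ := sInf_lt_iff.mp hT'.lt_top
  rw [sInf_eq_iInf', sInf_eq_iInf']
  exact ENNReal.le_iInf_mul_iInf ⟨⟨s, hs⟩, hs_lt.ne⟩ ⟨⟨t, ht⟩, ht_lt.ne⟩
    fun s t => h s s.2 t t.2

def IsGammaBound {n : ℕ} (B : Matrix (Fin n) (Fin n) ℝ) (X : Type*) [PseudoMetricSpace X]
    (p : ℝ) (g : ℝ≥0∞) : Prop :=
  ∀ x : Fin n → X, ENNReal.ofReal ((∑ i, ∑ j, dist (x i) (x j) ^ p) / (n : ℝ) ^ 2) ≤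
    g / (n : ℝ≥0∞) * ENNReal.ofReal (∑ i, ∑ j, B i j * dist (x i) (x j) ^ p)

def IsMarkovTypeBound (X : Type*) [PseudoMetricSpace X] (p : ℝ) (m : ℕ) (M : ℝ≥0∞) :
    Prop :=
  ∀ (n : ℕ) (A : Matrix (Fin n) (Fin n) ℝ), IsSymmStochastic A → ∀ x : Fin n → X,
    ENNReal.ofReal (∑ i, ∑ j, (A ^ m) i j * dist (x i) (x j) ^ p) ≤
      M ^ p * (m : ℝ≥0∞) * ENNReal.ofReal (∑ i, ∑ j, A i j * dist (x i) (x j) ^ p)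

section

variable {X : Type*} [PseudoMetricSpace X] {p : ℝ} {m n : ℕ}

lemma gammaNL_eq_sInf (B : Matrix (Fin n) (Fin n) ℝ) :
    gammaNL B X p = sInf {g | 0 < g ∧ IsGammaBound B X p g} := rfl

lemma markovTypeConst_eq_sInf :
    markovTypeConst X p m = sInf {M | 0 < M ∧ IsMarkovTypeBound X p m M} := rfl

lemma IsGammaBound.mul_of_isMarkovTypeBound {A : Matrix (Fin n) (Fin n) ℝ}
    (hA : IsSymmStochastic A) {M g : ℝ≥0∞} (hg : IsGammaBound (A ^ m) X p g)
    (hM : IsMarkovTypeBound X p m M) : IsGammaBound A X p (M ^ p * m * g) := by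
  intro x
  calc _ ≤ g / n * ENNReal.ofReal (∑ i, ∑ j, (A ^ m) i j * dist (x i) (x j) ^ p) := hg x
    _ ≤ g / n * (M ^ p * m * ENNReal.ofReal (∑ i, ∑ j, A i j * dist (x i) (x j) ^ p)) := by
      gcongr
      exact hM n A hA x
    _ = M ^ p * m * g / n * ENNReal.ofReal (∑ i, ∑ j, A i j * dist (x i) (x j) ^ p) := by
      simp only [div_eq_mul_inv]
      ring

lemma gammaNL_eq_zero_of_forall_dist_eq_zero (hp : p ≠ 0) (B : Matrix (Fin n) (Fin n) ℝ)
    (h : ∀ (x : Fin n → X) i j, dist (x i) (x j) = 0) : gammaNL B X p = 0 := by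
  refine le_antisymm (ENNReal.le_of_forall_pos_le_add fun ε hε _ => ?_) bot_le
  rw [zero_add]
  exact sInf_le ⟨ENNReal.coe_pos.mpr hε, fun x => by simp [h x, Real.zero_rpow hp]⟩

lemma IsGammaBound.mul_div_le {B : Matrix (Fin n) (Fin n) ℝ} {g : ℝ≥0∞}
    (hg : IsGammaBound B X p g) (x : Fin n → X) :
    ENNReal.ofReal ((∑ i, ∑ j, dist (x i) (x j) ^ p) / (n : ℝ) ^ 2) * n /
      ENNReal.ofReal (∑ i, ∑ j, B i j * dist (x i) (x j) ^ p) ≤ g := by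
  rcases eq_or_ne n 0 with rfl | hn
  · simp
  refine ENNReal.div_le_of_le_mul ?_
  calc _ ≤ g / n * ENNReal.ofReal (∑ i, ∑ j, B i j * dist (x i) (x j) ^ p) * n := by
        gcongr
        exact hg x
    _ = g * ENNReal.ofReal (∑ i, ∑ j, B i j * dist (x i) (x j) ^ p) := by
        rw [mul_right_comm, ENNReal.div_mul_cancel (by simpa) (ENNReal.natCast_ne_top n)]

lemma gammaNL_ne_zero_of_dist_pos (B : Matrix (Fin n) (Fin n) ℝ)
    {x : Fin n → X} {i j : Fin n} (hij : 0 < dist (x i) (x j)) : gammaNL B X p ≠ 0 := by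
  have hn : 0 < n := i.pos
  have hdisp : 0 < ∑ i, ∑ j, dist (x i) (x j) ^ p :=
    Finset.sum_pos' (fun _ _ => Finset.sum_nonneg fun _ _ => by positivity)
      ⟨i, Finset.mem_univ _, Finset.sum_pos' (fun _ _ => by positivity)
        ⟨j, Finset.mem_univ _, Real.rpow_pos_of_pos hij p⟩⟩
  have hL : ENNReal.ofReal ((∑ i, ∑ j, dist (x i) (x j) ^ p) / (n : ℝ) ^ 2) ≠ 0 :=
    (ENNReal.ofReal_pos.mpr (by positivity)).ne'
  have hn' : (n : ℝ≥0∞) ≠ 0 := by simpa using hn.ne'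
  exact ((ENNReal.div_pos (mul_ne_zero hL hn') ENNReal.ofReal_ne_top).trans_le
    (le_sInf fun _ hg => IsGammaBound.mul_div_le hg.2 x)).ne'

lemma IsMarkovTypeBound.one_le_rpow_mul (hp : p ≠ 0) (hm : m ≠ 0) {a b : X}
    (hab : 0 < dist a b) {M : ℝ≥0∞} (hM : IsMarkovTypeBound X p m M) : 1 ≤ M ^ p * m := by
  have hsum : ∑ i, ∑ j, averagingMatrix 2 i j * dist (![a, b] i) (![a, b] j) ^ p =
      dist a b ^ p := by
    simp [averagingMatrix, Fin.sum_univ_two, Real.zero_rpow hp, dist_comm b a]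
    ring
  have h := hM 2 _ (isSymmStochastic_averagingMatrix two_ne_zero) ![a, b]
  rw [(isIdempotentElem_averagingMatrix 2).pow_eq hm, hsum] at h
  have hd : ENNReal.ofReal (dist a b ^ p) ≠ 0 :=
    (ENNReal.ofReal_pos.mpr (Real.rpow_pos_of_pos hab p)).ne'
  exact (ENNReal.mul_le_mul_iff_left hd ENNReal.ofReal_ne_top).mp (by rwa [one_mul])

end

/-- **Lemma.** Fix `p ∈ [1,∞)` and `m, n ∈ ℕ`.  For every metric space `X` and every
`n × n` symmetric stochastic matrix `A`,
`γ(A,d_X^p) ≤ M_p(X;m)^p · m · γ(A^m, d_X^p)`. -/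
theorem gamma_le_markov_type_gamma_pow (p : ℝ) (hp : 1 ≤ p) (m : ℕ) (hm : 0 < m) {n : ℕ}
    (X : Type*) [MetricSpace X]
    (A : Matrix (Fin n) (Fin n) ℝ) (hA : IsSymmStochastic A) :
    gammaNL A X p ≤ markovTypeConst X p m ^ p * (m : ℝ≥0∞) * gammaNL (A ^ m) X p := by
  have hp0 : 0 < p := by linarith
  by_cases hX : ∀ (x : Fin n → X) i j, dist (x i) (x j) = 0
  · simp [gammaNL_eq_zero_of_forall_dist_eq_zero hp0.ne' A hX]
  push Not at hX
  obtain ⟨x, i, j, hij⟩ := hX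
  replace hij : 0 < dist (x i) (x j) := dist_nonneg.lt_of_ne' hij
  -- `M ↦ M ^ p * m` is an order isomorphism, hence commutes with `sInf`.
  let φ : ℝ≥0∞ ≃o ℝ≥0∞ := (ENNReal.orderIsoRpow p hp0).trans
    (ENNReal.mulRightOrderIso m (ENNReal.isUnit_iff.mpr ⟨by simp [hm.ne'], by simp⟩))
  change gammaNL A X p ≤ φ (markovTypeConst X p m) * gammaNL (A ^ m) X p
  rw [markovTypeConst_eq_sInf, map_sInf, gammaNL_eq_sInf (A ^ m)]
  refine ENNReal.le_sInf_mul_sInf ?_ (gammaNL_ne_zero_of_dist_pos _ hij) ?_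
  · refine (one_pos.trans_le (le_sInf ?_)).ne'
    rintro _ ⟨M, ⟨-, hM⟩, rfl⟩
    exact hM.one_le_rpow_mul hp0.ne' hm.ne' hij
  · rintro _ ⟨M, ⟨hM0, hM⟩, rfl⟩ g ⟨hg0, hg⟩
    refine sInf_le ⟨?_, hg.mul_of_isMarkovTypeBound hA hM⟩
    have : 0 < M ^ p := ENNReal.rpow_pos_of_nonneg hM0 hp0.le
    simp only [φ, OrderIso.trans_apply, ENNReal.orderIsoRpow_apply, ENNReal.mulRightOrderIso_apply]
    positivity
end

section
/- Fix p ∈ [1,2], n ∈ ℕ, and k_1,…,k_m ∈ {1,…,n} such that k_1 + ⋯ + k_m ≤ n. Then for every metric space (X,d_X) and every f : 𝔽₂ⁿ → X one has E_{k_1+⋯+k_m}(f) ≤ BMW_p(X)·m^{1/p − 1/2}·(∑_{j=1}^m E_{k_j}(f)²)^{1/2}. -/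
open scoped ENNReal

/-- `E_k(f) = E_k^{(2)}(f)` for `f : 𝔽₂ⁿ → X`:
`E_k(f)² = (1/(2ⁿ·binom(n,k)))·∑_{|I|=k} ∑_{z ∈ 𝔽₂ⁿ} d_X(f(z+e_I), f(z))²`. -/
noncomputable def cubeE {n : ℕ} {X : Type*} [PseudoMetricSpace X] (q : ℝ)
    (f : (Fin n → ZMod 2) → X) (k : ℕ) : ℝ :=
  ((∑ I ∈ Finset.univ.filter (fun I : Finset (Fin n) => I.card = k),
      ∑ z : Fin n → ZMod 2,
        dist (f (fun j => z j + if j ∈ I then 1 else 0)) (f z) ^ q) /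
    (2 ^ n * (n.choose k : ℝ))) ^ (1 / q)

/-- The BMW (Bourgain–Milman–Wolfson) type `p` constant of a metric space `X`:
the infimum over those `T ∈ (0,∞]` such that for every `n` and every `f : 𝔽₂ⁿ → X`,
`∑_x d(f(x),f(x+e))² ≤ T²·n^{2/p-1}·∑ᵢ∑_x d(f(x),f(x+eᵢ))²`
(equal to `∞` when no such `T` exists, in which case the conclusion below holds
trivially). -/
noncomputable def bmwConst (X : Type*) [PseudoMetricSpace X] (p : ℝ) : ℝ≥0∞ :=
  sInf {T : ℝ≥0∞ | 0 < T ∧ ∀ (n : ℕ) (f : (Fin n → ZMod 2) → X),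
    ENNReal.ofReal (∑ x : Fin n → ZMod 2, dist (f x) (f (fun j => x j + 1)) ^ 2) ≤
      T ^ 2 * (n : ℝ≥0∞) ^ (2 / p - 1) *
        ENNReal.ofReal (∑ i : Fin n, ∑ x : Fin n → ZMod 2,
          dist (f x) (f (fun j => x j + if j = i then 1 else 0)) ^ 2)}

/-!
Split a set of size `k₁ + ⋯ + k_m` into disjoint blocks `B_j` of sizes `k_j`. The linear map
`ε ↦ ∑ⱼ εⱼ e_{B_j}` embeds the `m`-cube into `𝔽₂ⁿ`, sending `e` to `e_{⋃ B_j}` and `e_j` to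
`e_{B_j}`; so BMW type, applied to `f` on every translate of this subcube, bounds the
displacement of `f` along `e_{⋃ B_j}` by its displacements along the `e_{B_j}`, with constant
`BMW_p(X)² m^{2/p-1}`. Averaging over all permutations of the coordinates turns each of these
displacements into the corresponding `E_k(f)²`, because the permutations carry a fixed `k`-set
onto every `k`-set equally often.
-/

open Finset Equiv Function
open scoped Nat NNReal

section Perm

variable {α : Type*} [Fintype α]

theorem exists_pairwise_disjoint_card_eq {ι : Type*} [Fintype ι] (k : ι → ℕ)
    (h : ∑ i, k i ≤ Fintype.card α) :
    ∃ B : ι → Finset α, (∀ i, #(B i) = k i) ∧ Pairwise (Disjoint on B) := by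
  obtain ⟨e⟩ : Nonempty ((Σ i, Fin (k i)) ↪ α) :=
    Embedding.nonempty_of_card_le (by simpa using h)
  refine ⟨fun i => univ.map ((Embedding.sigmaMk i).trans e), fun i => by simp,
    fun i j hij => disjoint_left.2 ?_⟩
  simp only [mem_map, mem_univ, true_and, Embedding.trans_apply, Embedding.sigmaMk_apply,
    not_exists]
  rintro _ ⟨a, rfl⟩ b hb
  exact hij (congrArg Sigma.fst (e.injective hb)).symm

variable [DecidableEq α]

theorem card_filter_map_perm_eq {C J : Finset α} (h : #C = #J) :
    #{σ : Perm α | C.map σ.toEmbedding = J} = #{σ : Perm α | C.map σ.toEmbedding = C} := by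
  obtain ⟨τ, rfl⟩ := Perm.exists_map_finset_eq C J h
  refine (card_equiv (Equiv.mulLeft τ) fun σ => ?_).symm
  simp only [mem_filter, mem_univ, true_and, coe_mulLeft, Perm.mul_def, trans_toEmbedding,
    ← map_map, map_inj]

theorem sum_perm_map_eq_nsmul {M : Type*} [AddCommMonoid M] (F : Finset α → M)
    (C : Finset α) :
    ∑ σ : Perm α, F (C.map σ.toEmbedding) =
      #{σ : Perm α | C.map σ.toEmbedding = C} • ∑ J with #J = #C, F J := by
  rw [← sum_fiberwise_of_maps_to (g := fun σ : Perm α => C.map σ.toEmbedding)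
    (t := {J | #J = #C}) (by simp), smul_sum]
  refine sum_congr rfl fun J hJ => ?_
  rw [sum_congr rfl fun σ hσ => by rw [(mem_filter.1 hσ).2], sum_const,
    card_filter_map_perm_eq (mem_filter.1 hJ).2.symm]

theorem choose_nsmul_sum_perm_map {M : Type*} [AddCommMonoid M] (F : Finset α → M)
    (C : Finset α) :
    (Fintype.card α).choose #C • ∑ σ : Perm α, F (C.map σ.toEmbedding) =
      (Fintype.card α)! • ∑ J with #J = #C, F J := by
  have hcard : #{σ : Perm α | C.map σ.toEmbedding = C} * (Fintype.card α).choose #C =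
      (Fintype.card α)! := by
    have h := sum_perm_map_eq_nsmul (fun _ => 1) C
    rw [← powerset_univ, ← powersetCard_eq_filter] at h
    simp only [sum_const, card_univ, Fintype.card_perm, card_powersetCard, smul_eq_mul,
      mul_one] at h
    exact h.symm
  rw [sum_perm_map_eq_nsmul, smul_smul, mul_comm, hcard]

end Perm

section Cube

variable {ι : Type*} [DecidableEq ι]

def cubeVec (I : Finset ι) : ι → ZMod 2 := ∑ i ∈ I, Pi.single i 1

theorem cubeVec_apply (I : Finset ι) (j : ι) : cubeVec I j = if j ∈ I then 1 else 0 := by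
  simp [cubeVec, Finset.sum_apply]

theorem cubeVec_biUnion {κ : Type*} [Fintype κ] {B : κ → Finset ι}
    (hB : Pairwise (Disjoint on B)) : cubeVec (univ.biUnion B) = ∑ j, cubeVec (B j) :=
  sum_biUnion fun _ _ _ _ hij => hB hij

end Cube

section EdgeSum

variable {G X : Type*} [AddCommGroup G] [Fintype G] [PseudoMetricSpace X]

def edgeSum (f : G → X) (v : G) : ℝ := ∑ z, dist (f z) (f (z + v)) ^ 2

theorem edgeSum_nonneg (f : G → X) (v : G) : 0 ≤ edgeSum f v :=
  sum_nonneg fun _ _ => sq_nonneg _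

theorem sum_sum_dist_add_sq {E : Type*} [Fintype E] (f : G → X) (w : E → G) (v : G) :
    ∑ z, ∑ ε, dist (f (z + w ε)) (f (z + w ε + v)) ^ 2 = Fintype.card E * edgeSum f v := by
  rw [sum_comm, ← nsmul_eq_mul, ← card_univ, ← sum_const]
  exact sum_congr rfl fun ε _ => Fintype.sum_equiv (Equiv.addRight (w ε)) _ _ fun _ => rfl

theorem edgeSum_sum_le [Module (ZMod 2) G] {m : ℕ} {R : ℝ}
    (hR : ∀ g : (Fin m → ZMod 2) → X, edgeSum g 1 ≤ R * ∑ i, edgeSum g (Pi.single i 1))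
    (f : G → X) (v : Fin m → G) : edgeSum f (∑ i, v i) ≤ R * ∑ i, edgeSum f (v i) := by
  set Φ := Fintype.linearCombination (ZMod 2) v
  have hΦ1 : Φ 1 = ∑ i, v i := by simp [Φ, Fintype.linearCombination_apply]
  have hΦsingle : ∀ i, Φ (Pi.single i 1) = v i := fun i => by
    simp [Φ, Fintype.linearCombination_apply_single]
  have h := sum_le_sum fun z (_ : z ∈ univ) => hR fun ε => f (z + Φ ε)
  simp only [edgeSum, map_add, hΦ1, hΦsingle, ← add_assoc, ← mul_sum] at h
  conv_rhs at h => rw [sum_comm]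
  simp only [sum_sum_dist_add_sq, ← mul_sum] at h
  rw [mul_left_comm] at h
  exact le_of_mul_le_mul_left h (by simp)

theorem edgeSum_eq_zero_iff {X : Type*} [MetricSpace X] {f : G → X} {v : G} :
    edgeSum f v = 0 ↔ ∀ z, f z = f (z + v) := by
  simp [edgeSum, sum_eq_zero_iff_of_nonneg]

theorem edgeSum_sum_eq_zero {X : Type*} [MetricSpace X] {κ : Type*} {f : G → X}
    (s : Finset κ) {v : κ → G} (h : ∀ i ∈ s, edgeSum f (v i) = 0) :
    edgeSum f (∑ i ∈ s, v i) = 0 := by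
  simp only [edgeSum_eq_zero_iff] at h ⊢
  refine sum_induction v (fun a => ∀ z, f z = f (z + a)) (fun a b ha hb z => ?_) (by simp) h
  rw [ha, hb, add_assoc]

end EdgeSum

section CubeE

variable {n : ℕ} {X : Type*} [PseudoMetricSpace X]

theorem cubeE_nonneg (q : ℝ) (f : (Fin n → ZMod 2) → X) (k : ℕ) : 0 ≤ cubeE q f k :=
  Real.rpow_nonneg (div_nonneg (sum_nonneg fun _ _ => sum_nonneg fun _ _ =>
    Real.rpow_nonneg dist_nonneg _) (by positivity)) _

theorem sq_cubeE_two (f : (Fin n → ZMod 2) → X) (k : ℕ) :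
    cubeE 2 f k ^ 2 = (∑ I with #I = k, edgeSum f (cubeVec I)) / (2 ^ n * n.choose k) := by
  have hI : ∀ I : Finset (Fin n),
      ∑ z, dist (f fun j => z j + if j ∈ I then 1 else 0) (f z) ^ (2 : ℝ) =
        edgeSum f (cubeVec I) := fun I => sum_congr rfl fun z _ => by
    rw [Real.rpow_two, dist_comm]
    congr 3
    ext j
    simp [cubeVec_apply]
  rw [cubeE, sum_congr rfl fun I _ => hI I, ← Real.rpow_natCast, ← Real.rpow_mul
    (div_nonneg (sum_nonneg fun _ _ => edgeSum_nonneg _ _) (by positivity))]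
  norm_num

theorem sum_perm_edgeSum_cubeVec_map (f : (Fin n → ZMod 2) → X) (C : Finset (Fin n)) :
    ∑ σ : Perm (Fin n), edgeSum f (cubeVec (C.map σ.toEmbedding)) =
      n ! * 2 ^ n * cubeE 2 f #C ^ 2 := by
  have hC : (0 : ℝ) < n.choose #C := by
    exact_mod_cast Nat.choose_pos (by simpa using card_le_univ C)
  have h := choose_nsmul_sum_perm_map (fun J => edgeSum f (cubeVec J)) C
  simp only [Fintype.card_fin, nsmul_eq_mul] at h
  rw [sq_cubeE_two]
  field_simp
  linarith

theorem sum_perm_edgeSum_sum_cubeVec_map (f : (Fin n → ZMod 2) → X) {κ : Type*} [Fintype κ]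
    {B : κ → Finset (Fin n)} (hB : Pairwise (Disjoint on B)) :
    ∑ σ : Perm (Fin n), edgeSum f (∑ j, cubeVec ((B j).map σ.toEmbedding)) =
      n ! * 2 ^ n * cubeE 2 f (∑ j, #(B j)) ^ 2 := by
  have hσ : ∀ σ : Perm (Fin n), ∑ j, cubeVec ((B j).map σ.toEmbedding) =
      cubeVec ((univ.biUnion B).map σ.toEmbedding) := fun σ => by
    rw [← cubeVec_biUnion fun i j hij => (disjoint_map _).2 (hB hij)]
    congr 1
    ext
    simp
  simp only [hσ, sum_perm_edgeSum_cubeVec_map, card_biUnion fun i _ j _ hij => hB hij]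

theorem sq_cubeE_sum_card_le {m : ℕ} {R : ℝ}
    (hR : ∀ g : (Fin m → ZMod 2) → X, edgeSum g 1 ≤ R * ∑ i, edgeSum g (Pi.single i 1))
    (f : (Fin n → ZMod 2) → X) {B : Fin m → Finset (Fin n)} (hB : Pairwise (Disjoint on B)) :
    cubeE 2 f (∑ j, #(B j)) ^ 2 ≤ R * ∑ j, cubeE 2 f #(B j) ^ 2 := by
  have h := sum_le_sum fun σ (_ : σ ∈ univ) =>
    edgeSum_sum_le hR f fun j => cubeVec ((B j).map (σ : Perm (Fin n)).toEmbedding)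
  rw [sum_perm_edgeSum_sum_cubeVec_map f hB, ← mul_sum, sum_comm] at h
  simp only [sum_perm_edgeSum_cubeVec_map, ← mul_sum] at h
  rw [mul_left_comm] at h
  exact le_of_mul_le_mul_left h (by positivity)

theorem cubeE_sum_card_eq_zero {X : Type*} [MetricSpace X] (f : (Fin n → ZMod 2) → X)
    {κ : Type*} [Fintype κ] {B : κ → Finset (Fin n)} (hB : Pairwise (Disjoint on B))
    (h : ∀ j, cubeE 2 f #(B j) = 0) : cubeE 2 f (∑ j, #(B j)) = 0 := by
  have hBσ : ∀ j (σ : Perm (Fin n)), edgeSum f (cubeVec ((B j).map σ.toEmbedding)) = 0 := by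
    intro j
    have hj := sum_perm_edgeSum_cubeVec_map f (B j)
    rw [h j, zero_pow two_ne_zero, mul_zero] at hj
    exact fun σ => (sum_eq_zero_iff_of_nonneg fun _ _ => edgeSum_nonneg _ _).1 hj σ (mem_univ _)
  have hE : (n ! * 2 ^ n : ℝ) * cubeE 2 f (∑ j, #(B j)) ^ 2 = 0 := by
    rw [← sum_perm_edgeSum_sum_cubeVec_map f hB]
    exact sum_eq_zero fun σ _ => edgeSum_sum_eq_zero _ fun j _ => hBσ j σ
  simpa [Nat.factorial_ne_zero] using hE

end CubeE

theorem edgeSum_one_le_of_bmw {X : Type*} [PseudoMetricSpace X] {m : ℕ} (hm : m ≠ 0) {p : ℝ}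
    {T : ℝ≥0} (hT : ∀ g : (Fin m → ZMod 2) → X,
      ENNReal.ofReal (∑ x, dist (g x) (g fun j => x j + 1) ^ 2) ≤
        (T : ℝ≥0∞) ^ 2 * (m : ℝ≥0∞) ^ (2 / p - 1) *
          ENNReal.ofReal (∑ i : Fin m, ∑ x,
            dist (g x) (g fun j => x j + if j = i then 1 else 0) ^ 2))
    (g : (Fin m → ZMod 2) → X) :
    edgeSum g 1 ≤ (T : ℝ) ^ 2 * (m : ℝ) ^ (2 / p - 1) * ∑ i, edgeSum g (Pi.single i 1) := by
  have hsingle : ∀ (i : Fin m) (x : Fin m → ZMod 2),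
      (fun j => x j + if j = i then 1 else 0) = x + Pi.single i 1 := fun i x => by
    ext j
    simp [Pi.single_apply]
  have hg := hT g
  simp only [hsingle] at hg
  rw [← ENNReal.ofReal_coe_nnreal, ← ENNReal.ofReal_natCast, ← ENNReal.ofReal_pow T.coe_nonneg,
    ENNReal.ofReal_rpow_of_pos (by positivity), ← ENNReal.ofReal_mul (by positivity),
    ← ENNReal.ofReal_mul (by positivity)] at hg
  exact (ENNReal.ofReal_le_ofReal_iff (mul_nonneg (by positivity)
    (sum_nonneg fun _ _ => edgeSum_nonneg _ _))).1 hg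

theorem eq_zero_of_rpow_mul_sqrt_sum_sq_eq_zero {m : ℕ} {a : ℝ} {x : Fin m → ℝ}
    (h : (m : ℝ) ^ a * √(∑ j, x j ^ 2) = 0) (j : Fin m) : x j = 0 := by
  have hm : (m : ℝ) ^ a ≠ 0 := (Real.rpow_pos_of_pos (by exact_mod_cast j.pos) a).ne'
  have hx := (Real.sqrt_eq_zero (sum_nonneg fun _ _ => sq_nonneg _)).1
    ((mul_eq_zero.1 h).resolve_left hm)
  exact pow_eq_zero_iff two_ne_zero |>.1 <|
    (sum_eq_zero_iff_of_nonneg fun _ _ => sq_nonneg _).1 hx j (mem_univ j)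

theorem cubeE_sum_card_le {X : Type*} [PseudoMetricSpace X] {n m : ℕ} {p : ℝ} {T : ℝ≥0}
    (hT : ∀ g : (Fin m → ZMod 2) → X,
      edgeSum g 1 ≤ (T : ℝ) ^ 2 * (m : ℝ) ^ (2 / p - 1) * ∑ i, edgeSum g (Pi.single i 1))
    (f : (Fin n → ZMod 2) → X) {B : Fin m → Finset (Fin n)} (hB : Pairwise (Disjoint on B)) :
    cubeE 2 f (∑ j, #(B j)) ≤
      T * ((m : ℝ) ^ (1 / p - 1 / 2) * √(∑ j, cubeE 2 f #(B j) ^ 2)) := by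
  have hpow : ((m : ℝ) ^ (1 / p - 1 / 2)) ^ 2 = (m : ℝ) ^ (2 / p - 1) := by
    rw [← Real.rpow_natCast, ← Real.rpow_mul (Nat.cast_nonneg m)]
    ring_nf
  refine (pow_le_pow_iff_left₀ (cubeE_nonneg _ _ _) (by positivity) two_ne_zero).1 ?_
  rw [mul_pow, mul_pow, hpow, Real.sq_sqrt (sum_nonneg fun _ _ => sq_nonneg _), ← mul_assoc]
  exact sq_cubeE_sum_card_le hT f hB

-- `bmwConst X p` may be `∞`, and `∞ * 0 = 0`, so a vanishing right-hand side is handled apart.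
theorem cubeE_partition_bound_general (p : ℝ) {n m : ℕ}
    (k : Fin m → ℕ) (hsum : ∑ j, k j ≤ n)
    (X : Type*) [MetricSpace X] (f : (Fin n → ZMod 2) → X) :
    ENNReal.ofReal (cubeE 2 f (∑ j, k j)) ≤
      bmwConst X p *
        ENNReal.ofReal ((m : ℝ) ^ (1 / p - 1 / 2) *
          Real.sqrt (∑ j, cubeE 2 f (k j) ^ 2)) := by
  obtain ⟨B, hBk, hB⟩ := exists_pairwise_disjoint_card_eq (α := Fin n) k (by simpa using hsum)
  obtain rfl : k = fun j => #(B j) := funext fun j => (hBk j).symm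
  rcases (show 0 ≤ (m : ℝ) ^ (1 / p - 1 / 2) * √(∑ j, cubeE 2 f #(B j) ^ 2) by
    positivity).eq_or_lt with hr | hr
  · simp [cubeE_sum_card_eq_zero f hB (eq_zero_of_rpow_mul_sqrt_sum_sq_eq_zero hr.symm)]
  have hm : m ≠ 0 := by
    rintro rfl
    simp at hr
  have hc : ENNReal.ofReal ((m : ℝ) ^ (1 / p - 1 / 2) * √(∑ j, cubeE 2 f #(B j) ^ 2)) ≠ 0 := by
    simpa using hr
  rw [← ENNReal.div_le_iff hc ENNReal.ofReal_ne_top]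
  refine le_sInf fun T ⟨_, hT⟩ => (ENNReal.div_le_iff hc ENNReal.ofReal_ne_top).2 ?_
  rcases eq_or_ne T ⊤ with rfl | hT_top
  · rw [ENNReal.top_mul hc]
    exact le_top
  lift T to ℝ≥0 using hT_top
  rw [← ENNReal.ofReal_coe_nnreal, ← ENNReal.ofReal_mul T.coe_nonneg]
  exact ENNReal.ofReal_le_ofReal (cubeE_sum_card_le (edgeSum_one_le_of_bmw hm (hT m)) f hB)

/-- **Lemma (partitioned BMW-type inequality).** Fix `p ∈ [1,2]`, `n ∈ ℕ` and
`k₁,…,k_m ∈ {1,…,n}` with `k₁+⋯+k_m ≤ n`.  For every metric space `X` and every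
`f : 𝔽₂ⁿ → X`,
`E_{k₁+⋯+k_m}(f) ≤ BMW_p(X)·m^{1/p-1/2}·(∑ⱼ E_{kⱼ}(f)²)^{1/2}`. -/
theorem cubeE_partition_bound (p : ℝ) (hp1 : 1 ≤ p) (hp2 : p ≤ 2) {n m : ℕ}
    (k : Fin m → ℕ) (hk : ∀ j, 1 ≤ k j ∧ k j ≤ n) (hsum : ∑ j, k j ≤ n)
    (X : Type*) [MetricSpace X] (f : (Fin n → ZMod 2) → X) :
    ENNReal.ofReal (cubeE 2 f (∑ j, k j)) ≤
      bmwConst X p *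
        ENNReal.ofReal ((m : ℝ) ^ (1 / p - 1 / 2) *
          Real.sqrt (∑ j, cubeE 2 f (k j) ^ 2)) :=
  cubeE_partition_bound_general p k hsum X f
end
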